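/- Let Σ be a finite alphabet of size σ and let y ∈ Σ* be a string of length n ≥ 1. Then σ ≤ |MAW(y)| ≤ (σ_y − 1)(n − 1) + σ, where σ_y is the number of distinct characters occurring in y. -/
import Mathlib


open List

/-- 1-indexed beginning positions of occurrences of `x` in `y`:
`BegPos y x = { i | 1 ≤ i ≤ |y| - |x| + 1, y[i..i+|x|-1] = x }`. -/
def BegPos {α : Type*} (y x : List α) : Set ℕ :=
  {i | 1 ≤ i ∧ i ≤ y.length - x.length + 1 ∧ x <+: y.drop (i - 1)}

/-- 1-indexed ending positions of occurrences of `x` in `y`: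
`EndPos y x = { i | |x| ≤ i ≤ |y|, y[i-|x|+1..i] = x }`. -/
def EndPos {α : Type*} (y x : List α) : Set ℕ :=
  {i | x.length ≤ i ∧ i ≤ y.length ∧ x <:+ y.take i}

/-- `IsLrepOf y w x` means `w = Lrep_y(x)`: `w` is left-equivalent to `x` in `y`
(`BegPos y w = BegPos y x`) and is the longest such string. -/
def IsLrepOf {α : Type*} (y w x : List α) : Prop :=
  BegPos y w = BegPos y x ∧ ∀ v : List α, BegPos y v = BegPos y x → v.length ≤ w.length

/-- `IsRrepOf y w x` means `w = Rrep_y(x)`: `w` is right-equivalent to `x` in `y`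
(`EndPos y w = EndPos y x`) and is the longest such string. -/
def IsRrepOf {α : Type*} (y w x : List α) : Prop :=
  EndPos y w = EndPos y x ∧ ∀ v : List α, EndPos y v = EndPos y x → v.length ≤ w.length

/-- `x` is a minimal absent word of `y`: `x` is not a substring of `y` and
every proper substring of `x` is a substring of `y`. -/
def IsMAW {α : Type*} (y x : List α) : Prop :=
  ¬ x <:+: y ∧ ∀ w : List α, w <:+: x → w ≠ x → w <:+: y

section Aux
set_option linter.unusedSectionVars false
variable {α : Type*} [DecidableEq α]

lemma endPos_nonempty {y x : List α} (hx : x <:+: y) : (EndPos y x).Nonempty := by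
  obtain ⟨s, t, rfl⟩ := hx
  refine ⟨(s ++ x).length, ?_, ?_, ?_⟩
  · simp
  · simp
  · rw [List.take_left]
    exact ⟨s, rfl⟩

lemma dropLast_infix_of_maw {y x : List α} (hx : IsMAW y x) (hne : x ≠ []) :
    x.dropLast <:+: y := by
  refine hx.2 _ (List.dropLast_prefix x).isInfix ?_
  intro hc
  have h1 := congrArg List.length hc
  rw [List.length_dropLast] at h1
  have h2 : 0 < x.length := List.length_pos_iff.mpr hne
  omega

lemma concat_getLastD {x : List α} (hne : x ≠ []) (d : α) :
    x.dropLast ++ [x.getLastD d] = x := by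
  rcases x.eq_nil_or_concat with rfl | ⟨z, b, rfl⟩
  · exact absurd rfl hne
  · simp

/-- key injectivity step -/
lemma maw_eq_of_dropLast_suffix {y x x' : List α} (hx : IsMAW y x) (hx' : IsMAW y x')
    (hnex : x ≠ []) (hnex' : x' ≠ []) (d : α)
    (hb : x.getLastD d = x'.getLastD d) (hz : x.dropLast <:+ x'.dropLast) : x = x' := by
  by_contra hne
  obtain ⟨s, hs⟩ := hz
  have hsuf : x <:+ x' := by
    refine ⟨s, ?_⟩
    conv_rhs => rw [← concat_getLastD hnex' d]
    rw [← hs, ← hb, List.append_assoc, concat_getLastD hnex d]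
  exact hx.1 (hx'.2 x hsuf.isInfix hne)

lemma replicate_maw (y : List α) (a : α) :
    ∃ k, IsMAW y (replicate (k + 1) a) := by
  refine ⟨Nat.findGreatest (fun j => replicate j a <:+: y) y.length, ?_⟩
  set K := Nat.findGreatest (fun j => replicate j a <:+: y) y.length with hK
  have hKspec : replicate K a <:+: y := by
    rw [hK]
    exact Nat.findGreatest_spec (P := fun j => replicate j a <:+: y) (Nat.zero_le _)
      (show replicate 0 a <:+: y by simp)
  have hKabs : ¬ replicate (K + 1) a <:+: y := by
    intro habs
    have hlen : K + 1 ≤ y.length := by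
      have := habs.length_le
      rwa [List.length_replicate] at this
    exact Nat.findGreatest_is_greatest (P := fun j => replicate j a <:+: y)
      (hK ▸ Nat.lt_succ_self K) hlen habs
  refine ⟨hKabs, ?_⟩
  intro w hw hne
  obtain ⟨m, hm, rfl⟩ := List.sublist_replicate_iff.mp hw.sublist
  have hmK : m ≤ K := by
    rcases Nat.lt_or_ge m (K + 1) with h' | h'
    · omega
    · exfalso; apply hne; congr 1; omega
  have hpre : replicate m a <+: replicate K a := by
    refine ⟨replicate (K - m) a, ?_⟩
    rw [← List.replicate_add]
    congr 1
    omega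
  exact hpre.isInfix.trans hKspec

end Aux

theorem maw_cardinality_bounds {α : Type*} [Fintype α] [DecidableEq α]
    (y : List α) (h : 1 ≤ y.length) :
    Fintype.card α ≤ {x : List α | IsMAW y x}.ncard ∧
      {x : List α | IsMAW y x}.ncard ≤
        (y.toFinset.card - 1) * (y.length - 1) + Fintype.card α := by
  have hyne : y ≠ [] := by intro h'; rw [h'] at h; simp at h
  set n := y.length with hn
  set S : Set (List α) := {x | IsMAW y x} with hS
  set d : α := y.getLast hyne with hd
  set Φ : List α → ℕ × α := fun x => (sInf (EndPos y x.dropLast), x.getLastD d) with hΦ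
  set S2 : Set (List α) := {x ∈ S | 2 ≤ x.length} with hS2
  set S1 : Set (List α) := {x ∈ S | x.length < 2} with hS1
  have hxne_of_mem : ∀ x ∈ S2, x ≠ [] := by
    intro x hx h'
    have h2 := hx.2
    rw [h'] at h2
    simp at h2
  have hfacts : ∀ x ∈ S2, sInf (EndPos y x.dropLast) ∈ EndPos y x.dropLast := by
    intro x hx
    exact Nat.sInf_mem (endPos_nonempty (dropLast_infix_of_maw hx.1 (hxne_of_mem x hx)))
  have hinj : Set.InjOn Φ S2 := by
    intro x hx x' hx' heq
    have hxne := hxne_of_mem x hx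
    have hxne' := hxne_of_mem x' hx'
    have h1 := hfacts x hx
    have h2 := hfacts x' hx'
    have he : sInf (EndPos y x.dropLast) = sInf (EndPos y x'.dropLast) :=
      congrArg Prod.fst heq
    have hb : x.getLastD d = x'.getLastD d := congrArg Prod.snd heq
    rw [← he] at h2
    obtain ⟨-, -, hsx⟩ := h1
    obtain ⟨-, -, hsx'⟩ := h2
    rcases le_total x.dropLast.length x'.dropLast.length with hle | hle
    · exact maw_eq_of_dropLast_suffix hx.1 hx'.1 hxne hxne' d hb
        (List.suffix_of_suffix_length_le hsx hsx' hle)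
    · exact (maw_eq_of_dropLast_suffix hx'.1 hx.1 hxne' hxne d hb.symm
        (List.suffix_of_suffix_length_le hsx' hsx hle)).symm
  set T : Finset (ℕ × α) :=
    ((Finset.Icc 1 (n-1)).biUnion fun e => {e} ×ˢ (y.toFinset.erase (y.getD e d)))
      ∪ ({n} ×ˢ y.toFinset) with hT
  have hmaps : Φ '' S2 ⊆ ↑T := by
    rintro _ ⟨x, hx, rfl⟩
    have hxne := hxne_of_mem x hx
    have hlen2 : 2 ≤ x.length := hx.2
    obtain ⟨hl1, hl2, hsuf⟩ := hfacts x hx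
    set e := sInf (EndPos y x.dropLast) with he
    have hzlen : 1 ≤ x.dropLast.length := by
      rw [List.length_dropLast]; omega
    have hzne : x.dropLast ≠ [] := by
      intro hc; rw [hc] at hzlen; simp at hzlen
    have he1 : 1 ≤ e := le_trans hzlen hl1
    have hbmem : x.getLastD d ∈ y.toFinset := by
      rw [List.mem_toFinset]
      have htail : x.tail <:+: y := by
        refine hx.1.2 _ (List.tail_suffix x).isInfix ?_
        intro hc
        have := congrArg List.length hc
        rw [List.length_tail] at this
        omega
      refine htail.subset ?_
      have h1 : x.tail = x.dropLast.tail ++ [x.getLastD d] := by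
        conv_lhs => rw [← concat_getLastD hxne d]
        exact List.tail_append_of_ne_nil hzne
      rw [h1]
      simp
    show (e, x.getLastD d) ∈ (↑T : Set (ℕ × α))
    rw [Finset.mem_coe, hT]
    by_cases hcase : e = n
    · exact Finset.mem_union_right _ (Finset.mem_product.mpr
        ⟨Finset.mem_singleton.mpr hcase, hbmem⟩)
    · have hen : e < n := lt_of_le_of_ne hl2 hcase
      have hbdiff : x.getLastD d ≠ y.getD e d := by
        intro hbad
        apply hx.1.1
        have hgetD : y.getD e d = y[e] := List.getD_eq_getElem y d hen
        have hx_suf : x <:+ y.take (e+1) := by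
          rw [List.take_succ]
          have hopt : y[e]?.toList = [x.getLastD d] := by
            rw [List.getElem?_eq_getElem hen]
            simp only [Option.toList_some]
            rw [hbad, hgetD]
          rw [hopt]
          obtain ⟨s, hs⟩ := hsuf
          refine ⟨s, ?_⟩
          have hre : s ++ x = s ++ x.dropLast ++ [x.getLastD d] := by
            rw [List.append_assoc, concat_getLastD hxne d]
          rw [hre, hs]
        exact hx_suf.isInfix.trans (List.take_prefix (e+1) y).isInfix
      refine Finset.mem_union_left _ (Finset.mem_biUnion.mpr ⟨e, ?_, ?_⟩)
      · rw [Finset.mem_Icc]; omega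
      · exact Finset.mem_product.mpr ⟨Finset.mem_singleton_self e,
          Finset.mem_erase.mpr ⟨hbdiff, hbmem⟩⟩
  have hTcard : T.card ≤ (y.toFinset.card - 1) * (n - 1) + y.toFinset.card := by
    have h1 : (({n} : Finset ℕ) ×ˢ y.toFinset).card = y.toFinset.card := by
      rw [Finset.card_product, Finset.card_singleton, one_mul]
    have h2 : ((Finset.Icc 1 (n-1)).biUnion fun e =>
        {e} ×ˢ (y.toFinset.erase (y.getD e d))).card ≤ (y.toFinset.card - 1) * (n - 1) := by
      refine le_trans (Finset.card_biUnion_le) ?_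
      have hterm : ∀ e ∈ Finset.Icc 1 (n-1),
          ({e} ×ˢ (y.toFinset.erase (y.getD e d))).card ≤ y.toFinset.card - 1 := by
        intro e hee
        rw [Finset.mem_Icc] at hee
        have hen : e < n := by omega
        rw [Finset.card_product, Finset.card_singleton, one_mul,
          Finset.card_erase_of_mem]
        rw [List.mem_toFinset, List.getD_eq_getElem y d hen]
        exact List.getElem_mem _
      refine le_trans (Finset.sum_le_sum hterm) ?_
      rw [Finset.sum_const, Nat.card_Icc, smul_eq_mul]
      have hx : n - 1 + 1 - 1 = n - 1 := by omega
      rw [hx, mul_comm]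
    calc T.card ≤ _ + _ := Finset.card_union_le _ _
      _ ≤ (y.toFinset.card - 1) * (n - 1) + y.toFinset.card := by rw [h1]; omega
  have hS2fin : S2.Finite := by
    have : (Φ '' S2).Finite := Set.Finite.subset T.finite_toSet hmaps
    exact Set.Finite.of_finite_image this hinj
  have hS2card : S2.ncard ≤ (y.toFinset.card - 1) * (n - 1) + y.toFinset.card := by
    calc S2.ncard = (Φ '' S2).ncard := (Set.ncard_image_of_injOn hinj).symm
      _ ≤ (↑T : Set (ℕ × α)).ncard := Set.ncard_le_ncard hmaps T.finite_toSet
      _ = T.card := Set.ncard_coe_finset T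
      _ ≤ _ := hTcard
  have hS1sub : S1 ⊆ (fun a => ([a] : List α)) '' ↑(y.toFinsetᶜ) := by
    intro x hx
    obtain ⟨hxm, hxl⟩ := hx
    have hxne : x ≠ [] := by
      intro h'
      exact hxm.1 (h' ▸ List.nil_infix)
    have hlen1 : x.length = 1 := by
      have := List.length_pos_iff.mpr hxne
      omega
    obtain ⟨a, rfl⟩ := List.length_eq_one_iff.mp hlen1
    refine ⟨a, ?_, rfl⟩
    simp only [Finset.coe_compl, Set.mem_compl_iff, Finset.mem_coe, List.mem_toFinset]
    intro hmem
    obtain ⟨s, t, rfl⟩ := List.mem_iff_append.mp hmem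
    exact hxm.1 ⟨s, t, by simp⟩
  have hS1fin : S1.Finite :=
    Set.Finite.subset (Set.Finite.image _ (y.toFinsetᶜ).finite_toSet) hS1sub
  have hS1card : S1.ncard ≤ Fintype.card α - y.toFinset.card := by
    calc S1.ncard ≤ ((fun a => ([a] : List α)) '' ↑(y.toFinsetᶜ)).ncard :=
          Set.ncard_le_ncard hS1sub (Set.Finite.image _ (y.toFinsetᶜ).finite_toSet)
      _ ≤ (↑(y.toFinsetᶜ) : Set α).ncard := Set.ncard_image_le (y.toFinsetᶜ).finite_toSet
      _ = (y.toFinsetᶜ).card := Set.ncard_coe_finset _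
      _ = Fintype.card α - y.toFinset.card := by rw [Finset.card_compl]
  have hdecomp : S = S1 ∪ S2 := by
    ext x
    simp only [hS1, hS2, Set.mem_union, Set.mem_setOf_eq]
    constructor
    · intro hx
      rcases lt_or_ge x.length 2 with hl | hl
      · exact Or.inl ⟨hx, hl⟩
      · exact Or.inr ⟨hx, hl⟩
    · rintro (⟨hx, -⟩ | ⟨hx, -⟩) <;> exact hx
  have hSfin : S.Finite := by rw [hdecomp]; exact hS1fin.union hS2fin
  have hσy1 : 1 ≤ y.toFinset.card := by
    rw [Nat.one_le_iff_ne_zero, ← Nat.pos_iff_ne_zero, Finset.card_pos]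
    exact ⟨d, List.mem_toFinset.mpr (List.getLast_mem hyne)⟩
  have hσyσ : y.toFinset.card ≤ Fintype.card α := Finset.card_le_univ _
  constructor
  · set g : α → List α := fun a =>
      replicate (Classical.choose (replicate_maw y a) + 1) a with hg
    have hgmaw : ∀ a, g a ∈ S := fun a => Classical.choose_spec (replicate_maw y a)
    have hginj : Function.Injective g := by
      intro a a' hgg
      have := congrArg List.head? hgg
      simpa [hg, List.replicate_succ] using this
    have hsub : Set.range g ⊆ S := by rintro _ ⟨a, rfl⟩; exact hgmaw a
    calc Fintype.card α = (Set.univ : Set α).ncard := by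
          rw [Set.ncard_univ, Nat.card_eq_fintype_card]
      _ = (g '' Set.univ).ncard := (Set.ncard_image_of_injOn (hginj.injOn)).symm
      _ ≤ S.ncard := Set.ncard_le_ncard (by rw [Set.image_univ]; exact hsub) hSfin
  · calc S.ncard ≤ S1.ncard + S2.ncard := by
          rw [hdecomp]; exact Set.ncard_union_le S1 S2
      _ ≤ (Fintype.card α - y.toFinset.card) +
            ((y.toFinset.card - 1) * (n - 1) + y.toFinset.card) :=
          Nat.add_le_add hS1card hS2card
      _ = (y.toFinset.card - 1) * (n - 1) + Fintype.card α := by omega
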